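/- arXiv:1501.06972 — 5 statements merged into one kernel-verified Lean document; each statement's English description precedes it below -/
import Mathlib

section
/- Let D be a countable dense subset of the Cantor space 2^ω, and let 𝔄_0 be the Boolean algebra of subsets of D generated by {C ∩ D : C clopen in 2^ω} together with all finite subsets of D. Then every element of 𝔄_0 has the form (C ∩ D) △ F for some clopen C ⊆ 2^ω and finite F ⊆ D, and the function μ_0((C ∩ D) △ F) = λ(C) is a well-defined finitely additive probability measure on 𝔄_0, where λ is the standard product measure on 2^ω. -/
open MeasureTheory

/-- The algebra 𝔄₀ of subsets of D generated by traces of clopen subsets of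
the Cantor space 2^ω = ℕ → Bool and the finite subsets of D (complements are
taken relative to D). -/
def alg0 (D : Set (ℕ → Bool)) : Set (Set (ℕ → Bool)) :=
  ⋂₀ {𝔇 : Set (Set (ℕ → Bool)) |
    (∀ C : Set (ℕ → Bool), IsClopen C → C ∩ D ∈ 𝔇) ∧
    (∀ F : Set (ℕ → Bool), F.Finite → F ⊆ D → F ∈ 𝔇) ∧
    (∀ A ∈ 𝔇, ∀ B ∈ 𝔇, A ∪ B ∈ 𝔇) ∧
    (∀ A ∈ 𝔇, ∀ B ∈ 𝔇, A ∩ B ∈ 𝔇) ∧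
    (∀ A ∈ 𝔇, D \ A ∈ 𝔇)}

section Aux
open Set


lemma cylinder_isOpen (t : Finset ℕ) (z : ℕ → Bool) :
    IsOpen {y : ℕ → Bool | ∀ i ∈ t, y i = z i} := by
  have : {y : ℕ → Bool | ∀ i ∈ t, y i = z i} = ⋂ i ∈ t, (fun y : ℕ → Bool => y i) ⁻¹' {z i} := by
    ext y; simp
  rw [this]
  exact isOpen_biInter_finset fun i _ => (continuous_apply i).isOpen_preimage _ (isOpen_discrete _)

lemma clopen_empty_of_finite_inter {D : Set (ℕ → Bool)} (hDd : Dense D)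
    {C : Set (ℕ → Bool)} (hC : IsOpen C) (hfin : (C ∩ D).Finite) : C = ∅ := by
  by_contra h
  obtain ⟨x, hx⟩ := Set.nonempty_iff_ne_empty.mpr h
  obtain ⟨s, hs⟩ : ∃ s : Finset ℕ, {y | ∀ i ∈ s, y i = x i} ⊆ C := by
    rw [isOpen_pi_iff] at hC
    obtain ⟨I, u, hu, hsub⟩ := hC x hx
    exact ⟨I, fun y hy => hsub fun i hi => (hy i hi) ▸ (hu i hi).2⟩
  -- for each n ∉ s, a nonempty open cylinder W n ⊆ C, pairwise disjoint
  set z : ℕ → ℕ → Bool := fun n m => if m ∈ s then x m else if m = n then true else false with hz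
  set W : ℕ → Set (ℕ → Bool) := fun n => {y | ∀ i ∈ s ∪ Finset.range (n+1), y i = z n i} with hW
  have hWopen : ∀ n, IsOpen (W n) := fun n => cylinder_isOpen _ _
  have hWsub : ∀ n, W n ⊆ C := by
    intro n y hy
    apply hs
    intro i hi
    have := hy i (Finset.mem_union_left _ hi)
    simpa [hz, hi] using this
  have hWne : ∀ n, (W n).Nonempty := fun n => ⟨z n, fun i _ => rfl⟩
  have hWd : ∀ n n', n ∉ s → n' ∉ s → n < n' → Disjoint (W n) (W n') := by
    intro n n' hn hn' hlt
    rw [Set.disjoint_left]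
    intro y hyn hyn'
    have h1 : y n = true := by
      have := hyn n (Finset.mem_union_right _ (Finset.mem_range.mpr (Nat.lt_succ_self n)))
      simpa [hz, hn] using this
    have h2 : y n = false := by
      have := hyn' n (Finset.mem_union_right _ (Finset.mem_range.mpr (Nat.lt_succ_of_lt hlt)))
      simp only [hz] at this
      simpa [hn, Nat.ne_of_lt hlt] using this
    rw [h1] at h2; exact Bool.noConfusion h2
  have hd : ∀ n : ℕ, ∃ p, n ∉ s → p ∈ D ∩ W n := by
    intro n
    by_cases hn : n ∉ s
    · obtain ⟨p, hp, hp2⟩ := hDd.exists_mem_open (hWopen n) (hWne n)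
      exact ⟨p, fun _ => ⟨hp, hp2⟩⟩
    · exact ⟨x, fun h => absurd (not_not.mp hn) h⟩
  choose d hd using hd
  have hT : {n : ℕ | n ∉ s}.Infinite := s.finite_toSet.infinite_compl
  have hinj : Set.InjOn d {n : ℕ | n ∉ s} := by
    intro n hn n' hn' he
    by_contra hne
    rcases Nat.lt_or_ge n n' with hlt | hge
    · exact (Set.disjoint_left.mp (hWd n n' hn hn' hlt)) (hd n hn).2 (he ▸ (hd n' hn').2)
    · have hlt : n' < n := lt_of_le_of_ne hge (Ne.symm hne)
      exact (Set.disjoint_left.mp (hWd n' n hn' hn hlt)) (hd n' hn').2 (he ▸ (hd n hn).2)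
  have himg : (d '' {n : ℕ | n ∉ s}).Infinite := hT.image hinj
  have : (d '' {n : ℕ | n ∉ s}) ⊆ C ∩ D := by
    rintro p ⟨n, hn, rfl⟩
    exact ⟨hWsub n (hd n hn).2, (hd n hn).1⟩
  exact himg (hfin.subset this)

lemma wd_clopen_eq {D : Set (ℕ → Bool)} (hDd : Dense D)
    {C C' F F' : Set (ℕ → Bool)} (hC : IsClopen C) (hC' : IsClopen C')
    (hF : F.Finite) (hF' : F'.Finite)
    (h : symmDiff (C ∩ D) F = symmDiff (C' ∩ D) F') : C = C' := by
  have key : symmDiff C C' ∩ D ⊆ F ∪ F' := by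
    intro x hx
    have hh := Set.ext_iff.mp h x
    simp only [Set.mem_symmDiff, Set.mem_inter_iff, Set.mem_union] at hh hx ⊢
    tauto
  have hop : IsOpen (symmDiff C C') := by
    rw [Set.symmDiff_def]
    exact (hC.2.sdiff hC'.1).union (hC'.2.sdiff hC.1)
  have := clopen_empty_of_finite_inter hDd hop (((hF.union hF').subset key))
  exact symmDiff_eq_bot.mp this

/-- representable sets -/
def formSet (D : Set (ℕ → Bool)) : Set (Set (ℕ → Bool)) :=
  {Y | ∃ C F : Set (ℕ → Bool), IsClopen C ∧ F.Finite ∧ F ⊆ D ∧ Y = symmDiff (C ∩ D) F}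

lemma mem_formSet_of {D X C G : Set (ℕ → Bool)} (hX : X ⊆ D) (hC : IsClopen C)
    (hG : G.Finite) (hsub : symmDiff X (C ∩ D) ⊆ G) :
    ∃ F, F.Finite ∧ F ⊆ D ∧ X = symmDiff (C ∩ D) F := by
  refine ⟨symmDiff (C ∩ D) X, ?_, ?_, ?_⟩
  · exact hG.subset (by rw [symmDiff_comm]; exact hsub)
  · exact Set.Subset.trans symmDiff_subset_union (Set.union_subset (Set.inter_subset_right) hX)
  · rw [symmDiff_symmDiff_cancel_left]

lemma formSet_subset_D {D Y : Set (ℕ → Bool)} (h : Y ∈ formSet D) : Y ⊆ D := by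
  obtain ⟨C, F, _, _, hFD, rfl⟩ := h
  exact Set.Subset.trans symmDiff_subset_union (Set.union_subset Set.inter_subset_right hFD)

lemma alg0_subset_formSet (D : Set (ℕ → Bool)) : alg0 D ⊆ formSet D := by
  intro Y hY
  refine hY (formSet D) ⟨?_, ?_, ?_, ?_, ?_⟩
  · exact fun C hC => ⟨C, ∅, hC, Set.finite_empty, Set.empty_subset _, by
      ext x; simp [Set.mem_symmDiff]⟩
  · exact fun F hF hFD => ⟨∅, F, isClopen_empty, hF, hFD, by
      ext x; simp [Set.mem_symmDiff]⟩
  · rintro A ⟨C, F, hC, hF, hFD, rfl⟩ B ⟨C', F', hC', hF', hFD', rfl⟩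
    have h1 : symmDiff (C ∩ D) F ∪ symmDiff (C' ∩ D) F' ⊆ D :=
      Set.union_subset (formSet_subset_D ⟨C, F, hC, hF, hFD, rfl⟩)
        (formSet_subset_D ⟨C', F', hC', hF', hFD', rfl⟩)
    obtain ⟨F'', h1', h2', h3'⟩ := mem_formSet_of (D := D) h1 (hC.union hC') (hF.union hF')
      (by intro x hx
          simp only [Set.mem_symmDiff, Set.mem_union, Set.mem_inter_iff] at hx ⊢
          tauto)
    exact ⟨C ∪ C', F'', hC.union hC', h1', h2', h3'⟩
  · rintro A ⟨C, F, hC, hF, hFD, rfl⟩ B ⟨C', F', hC', hF', hFD', rfl⟩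
    have h1 : symmDiff (C ∩ D) F ∩ symmDiff (C' ∩ D) F' ⊆ D :=
      Set.Subset.trans Set.inter_subset_left (formSet_subset_D ⟨C, F, hC, hF, hFD, rfl⟩)
    obtain ⟨F'', h1', h2', h3'⟩ := mem_formSet_of (D := D) h1 (hC.inter hC') (hF.union hF')
      (by intro x hx
          simp only [Set.mem_symmDiff, Set.mem_union, Set.mem_inter_iff] at hx ⊢
          tauto)
    exact ⟨C ∩ C', F'', hC.inter hC', h1', h2', h3'⟩
  · rintro A ⟨C, F, hC, hF, hFD, rfl⟩
    obtain ⟨F'', h1', h2', h3'⟩ := mem_formSet_of (D := D) (X := D \ symmDiff (C ∩ D) F) (C := Cᶜ) (Set.diff_subset) hC.compl hF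
      (by intro x hx
          simp only [Set.mem_symmDiff, Set.mem_diff, Set.mem_inter_iff, Set.mem_compl_iff] at hx ⊢
          tauto)
    exact ⟨Cᶜ, F'', hC.compl, h1', h2', h3'⟩

open scoped Classical in
noncomputable def mu0 (lam : Measure (ℕ → Bool)) (D : Set (ℕ → Bool))
    (Y : Set (ℕ → Bool)) : ℝ :=
  if h : ∃ C, IsClopen C ∧ ∃ F : Set (ℕ → Bool), F.Finite ∧ F ⊆ D ∧ Y = symmDiff (C ∩ D) F
  then (lam h.choose).toReal else 0

lemma mu0_eval (lam : Measure (ℕ → Bool)) {D : Set (ℕ → Bool)} (hDd : Dense D)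
    {C F : Set (ℕ → Bool)} (hC : IsClopen C) (hF : F.Finite) (hFD : F ⊆ D) :
    mu0 lam D (symmDiff (C ∩ D) F) = (lam C).toReal := by
  have h : ∃ C', IsClopen C' ∧ ∃ F' : Set (ℕ → Bool), F'.Finite ∧ F' ⊆ D ∧
      symmDiff (C ∩ D) F = symmDiff (C' ∩ D) F' := ⟨C, hC, F, hF, hFD, rfl⟩
  simp only [mu0]
  rw [dif_pos h]
  obtain ⟨hC', F', hF', hFD', heq⟩ := h.choose_spec
  rw [wd_clopen_eq hDd hC' hC hF' hF heq.symm]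


end Aux
/-- every element of 𝔄₀ has the form (C ∩ D) △ F, and
μ₀((C ∩ D) △ F) = λ(C) is a well-defined finitely additive probability measure
on 𝔄₀, where λ is the standard product measure on 2^ω (characterized on
cylinders). -/
theorem stmt_8 (lam : Measure (ℕ → Bool))
    (hlam : ∀ (s : Finset ℕ) (σ : ℕ → Bool),
      lam {x | ∀ i ∈ s, x i = σ i} = (1/2 : ENNReal) ^ s.card)
    (D : Set (ℕ → Bool)) (hDc : D.Countable) (hDd : Dense D) :
    (∀ Y ∈ alg0 D, ∃ C F : Set (ℕ → Bool),
      IsClopen C ∧ F.Finite ∧ F ⊆ D ∧ Y = symmDiff (C ∩ D) F) ∧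
    ∃ μ₀ : Set (ℕ → Bool) → ℝ,
      -- the defining formula (in particular it is well-defined)
      (∀ C F : Set (ℕ → Bool), IsClopen C → F.Finite → F ⊆ D →
        μ₀ (symmDiff (C ∩ D) F) = (lam C).toReal) ∧
      -- finitely additive probability measure on 𝔄₀
      (∀ Y ∈ alg0 D, 0 ≤ μ₀ Y) ∧
      μ₀ D = 1 ∧
      (∀ Y ∈ alg0 D, ∀ Z ∈ alg0 D,
        Disjoint Y Z → μ₀ (Y ∪ Z) = μ₀ Y + μ₀ Z) := by
  have huniv : lam Set.univ = 1 := by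
    have := hlam ∅ (fun _ => true)
    simpa using this
  have hfin : ∀ C : Set (ℕ → Bool), lam C ≠ ⊤ := by
    intro C
    exact ne_top_of_le_ne_top (by rw [huniv]; exact ENNReal.one_ne_top) (measure_mono (Set.subset_univ C))
  constructor
  · exact fun Y hY => alg0_subset_formSet D hY
  refine ⟨mu0 lam D, fun C F hC hF hFD => mu0_eval lam hDd hC hF hFD, ?_, ?_, ?_⟩
  · intro Y _
    unfold mu0
    split
    · exact ENNReal.toReal_nonneg
    · exact le_refl 0
  · have hD : symmDiff ((Set.univ : Set (ℕ → Bool)) ∩ D) ∅ = D := by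
      ext x; simp [Set.mem_symmDiff]
    have h2 := mu0_eval lam hDd isClopen_univ Set.finite_empty (Set.empty_subset D)
    rw [hD] at h2
    rw [h2, huniv]
    simp
  · intro Y hY Z hZ hdisj
    obtain ⟨C, F, hC, hF, hFD, rfl⟩ := alg0_subset_formSet D hY
    obtain ⟨C', F', hC', hF', hFD', rfl⟩ := alg0_subset_formSet D hZ
    -- C ∩ C' = ∅
    have hCC' : C ∩ C' = ∅ := by
      apply clopen_empty_of_finite_inter hDd (hC.2.inter hC'.2)
      apply (hF.union hF').subset
      intro x hx
      obtain ⟨⟨hxC, hxC'⟩, hxD⟩ := hx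
      by_cases h1 : x ∈ F
      · exact Or.inl h1
      by_cases h2 : x ∈ F'
      · exact Or.inr h2
      exfalso
      have hxY : x ∈ symmDiff (C ∩ D) F := Or.inl ⟨⟨hxC, hxD⟩, h1⟩
      have hxZ : x ∈ symmDiff (C' ∩ D) F' := Or.inl ⟨⟨hxC', hxD⟩, h2⟩
      exact Set.disjoint_left.mp hdisj hxY hxZ
    have hsubD : symmDiff (C ∩ D) F ∪ symmDiff (C' ∩ D) F' ⊆ D :=
      Set.union_subset (formSet_subset_D ⟨C, F, hC, hF, hFD, rfl⟩)
        (formSet_subset_D ⟨C', F', hC', hF', hFD', rfl⟩)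
    obtain ⟨F'', h1', h2', h3'⟩ := mem_formSet_of (D := D) hsubD (hC.union hC') (hF.union hF')
      (by intro x hx
          simp only [Set.mem_symmDiff, Set.mem_union, Set.mem_inter_iff] at hx ⊢
          tauto)
    rw [h3', mu0_eval lam hDd (hC.union hC') h1' h2',
      mu0_eval lam hDd hC hF hFD, mu0_eval lam hDd hC' hF' hFD']
    rw [measure_union (Set.disjoint_iff_inter_eq_empty.mpr hCC') hC'.2.measurableSet]
    exact ENNReal.toReal_add (hfin C) (hfin C')
end

section
/- Let D be a countable dense subset of 2^ω and let μ_0 be the measure on the algebra 𝔄_0 (generated by traces of clopen sets and finite sets) defined by μ_0((C ∩ D) △ F) = λ(C). Then μ_0 is almost strictly positive: for A ∈ 𝔄_0, μ_0(A) = 0 if and only if A is finite. -/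
/-!
Every member of 𝔄₀ is a finite modification `(C ∩ D) ∆ F` of a clopen trace, so it is finite
iff `C ∩ D` is. Since every cylinder has positive λ-measure, `λ C = 0` forces the open set `C`
to be empty; and since Cantor space has no isolated points, a dense `D` meets every nonempty
open set in infinitely many points.
-/

open MeasureTheory Measure Filter Topology Set

open scoped symmDiff

def AlmostClopenTrace {X : Type*} [TopologicalSpace X] (D A : Set X) : Prop :=
  A ⊆ D ∧ ∃ C, IsClopen C ∧ (A ∆ (C ∩ D)).Finite

lemma AlmostClopenTrace.exists_eq_symmDiff {X : Type*} [TopologicalSpace X] {D A : Set X}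
    (hA : AlmostClopenTrace D A) :
    ∃ C F, IsClopen C ∧ F.Finite ∧ F ⊆ D ∧ A = (C ∩ D) ∆ F := by
  obtain ⟨hAD, C, hC, hfin⟩ := hA
  refine ⟨C, A ∆ (C ∩ D), hC, hfin, symmDiff_subset_union.trans ?_, ?_⟩
  · exact union_subset hAD inter_subset_right
  · rw [symmDiff_comm A, symmDiff_symmDiff_cancel_left]

lemma almostClopenTrace_of_mem_alg0 {D A : Set (ℕ → Bool)} (hA : A ∈ alg0 D) :
    AlmostClopenTrace D A := by
  refine hA {A | AlmostClopenTrace D A} ⟨?_, ?_, ?_, ?_, ?_⟩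
  · exact fun C hC => ⟨inter_subset_right, C, hC, by simp⟩
  · refine fun F hF hFD => ⟨hFD, ∅, isClopen_empty, ?_⟩
    rwa [empty_inter, ← bot_eq_empty, symmDiff_bot]
  · rintro A ⟨hAD, C₁, hC₁, hA⟩ B ⟨hBD, C₂, hC₂, hB⟩
    refine ⟨union_subset hAD hBD, C₁ ∪ C₂, hC₁.union hC₂, (hA.union hB).subset ?_⟩
    rw [union_inter_distrib_right]
    exact union_symmDiff_union_subset
  · rintro A ⟨hAD, C₁, hC₁, hA⟩ B ⟨hBD, C₂, hC₂, hB⟩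
    refine ⟨inter_subset_left.trans hAD, C₁ ∩ C₂, hC₁.inter hC₂, (hA.union hB).subset ?_⟩
    intro x
    simp only [mem_symmDiff, mem_inter_iff, mem_union]
    tauto
  · rintro A ⟨-, C, hC, hA⟩
    refine ⟨sdiff_subset, Cᶜ, hC.compl, hA.subset ?_⟩
    intro x
    simp only [mem_symmDiff, mem_inter_iff, Set.mem_sdiff, mem_compl_iff]
    tauto

lemma Set.finite_symmDiff_iff_left {α : Type*} {s t : Set α} (ht : t.Finite) :
    (s ∆ t).Finite ↔ s.Finite :=
  ⟨fun h => by simpa using h.symmDiff ht, fun h => h.symmDiff ht⟩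

instance Pi.nhdsNE_neBot {ι : Type*} [Infinite ι] {X : ι → Type*}
    [∀ i, TopologicalSpace (X i)] [∀ i, Nontrivial (X i)] (x : ∀ i, X i) :
    NeBot (𝓝[≠] x) := by
  classical
  choose y hy using fun i => exists_ne (x i)
  have hconv : Tendsto (fun i => Function.update x i (y i)) cofinite (𝓝[≠] x) := by
    refine tendsto_nhdsWithin_iff.mpr ⟨tendsto_pi_nhds.mpr fun j => ?_, ?_⟩
    · refine tendsto_const_nhds.congr' ?_
      filter_upwards [eventually_cofinite_ne j] with i hij
      rw [Function.update_of_ne hij.symm]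
    · refine Eventually.of_forall fun i hi => hy i ?_
      simpa using congrFun hi i
  exact hconv.neBot

lemma Dense.infinite_inter_of_isOpen {X : Type*} [TopologicalSpace X] [T1Space X]
    [∀ x : X, NeBot (𝓝[≠] x)] {D U : Set X} (hD : Dense D) (hU : IsOpen U)
    (hne : U.Nonempty) : (U ∩ D).Infinite := fun hfin => by
  obtain ⟨x, hxU, hxD, hx⟩ := (hD.sdiff_finite hfin).inter_open_nonempty U hU hne
  exact hx ⟨hxU, hxD⟩

lemma isOpenPosMeasure_of_cylinder_ne_zero {ι : Type*} {X : ι → Type*}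
    [∀ i, TopologicalSpace (X i)] [∀ i, DiscreteTopology (X i)] [MeasurableSpace (∀ i, X i)]
    (μ : Measure (∀ i, X i))
    (h : ∀ (s : Finset ι) (σ : ∀ i, X i), μ {x | ∀ i ∈ s, x i = σ i} ≠ 0) :
    IsOpenPosMeasure μ where
  open_pos U hU := by
    rintro ⟨x, hx⟩
    obtain ⟨s, u, hxu, hsub⟩ := isOpen_pi_iff.mp hU x hx
    refine fun h0 => h s x (measure_mono_null (fun y hy => hsub fun i hi => ?_) h0)
    rw [(hy i hi : y i = x i)]
    exact (hxu i hi).2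

theorem stmt_9_general (lam : Measure (ℕ → Bool))
    (hlam : ∀ (s : Finset ℕ) (σ : ℕ → Bool),
      lam {x | ∀ i ∈ s, x i = σ i} = (1/2 : ENNReal) ^ s.card)
    (D : Set (ℕ → Bool)) (hDd : Dense D)
    (μ₀ : Set (ℕ → Bool) → ℝ)
    (hμ₀ : ∀ C F : Set (ℕ → Bool), IsClopen C → F.Finite → F ⊆ D →
      μ₀ (symmDiff (C ∩ D) F) = (lam C).toReal) :
    ∀ A ∈ alg0 D, (μ₀ A = 0 ↔ A.Finite) := by
  intro A hA
  obtain ⟨C, F, hC, hF, hFD, rfl⟩ := (almostClopenTrace_of_mem_alg0 hA).exists_eq_symmDiff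
  have : IsProbabilityMeasure lam := ⟨by simpa using hlam ∅ default⟩
  have : IsOpenPosMeasure lam :=
    isOpenPosMeasure_of_cylinder_ne_zero lam fun s σ => by simp [hlam]
  rw [hμ₀ C F hC hF hFD, ENNReal.toReal_eq_zero_iff, or_iff_left (measure_ne_top _ _),
    hC.isOpen.measure_eq_zero_iff lam, finite_symmDiff_iff_left hF]
  exact ⟨fun h => by simp [h], fun h =>
    not_nonempty_iff_eq_empty.mp fun hne => hDd.infinite_inter_of_isOpen hC.isOpen hne h⟩

/-- the measure μ₀((C ∩ D) △ F) = λ(C) on 𝔄₀ is almost strictly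
positive: μ₀(A) = 0 iff A is finite. -/
theorem stmt_9 (lam : Measure (ℕ → Bool))
    (hlam : ∀ (s : Finset ℕ) (σ : ℕ → Bool),
      lam {x | ∀ i ∈ s, x i = σ i} = (1/2 : ENNReal) ^ s.card)
    (D : Set (ℕ → Bool)) (hDc : D.Countable) (hDd : Dense D)
    (μ₀ : Set (ℕ → Bool) → ℝ)
    (hμ₀ : ∀ C F : Set (ℕ → Bool), IsClopen C → F.Finite → F ⊆ D →
      μ₀ (symmDiff (C ∩ D) F) = (lam C).toReal) :
    ∀ A ∈ alg0 D, (μ₀ A = 0 ↔ A.Finite) :=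
  stmt_9_general lam hlam D hDd μ₀ hμ₀
end

section
/- Let D be a countable dense subset of 2^ω and 𝔄_0 the algebra generated by traces of clopen sets and finite subsets of D, with the measure μ_0((C ∩ D) △ F) = λ(C). Then μ_0 is nonatomic in the sense that for every A ∈ 𝔄_0 and every ε > 0, A can be written as a finite union of elements of 𝔄_0 each of μ_0-measure at most ε. -/
open MeasureTheory

section CylinderPartition

def cantorCylinder (s : Finset ℕ) (τ : s → Bool) : Set (ℕ → Bool) :=
  s.restrict ⁻¹' {τ}

lemma isClopen_cantorCylinder (s : Finset ℕ) (τ : s → Bool) : IsClopen (cantorCylinder s τ) :=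
  (isClopen_discrete {τ}).preimage (Finset.continuous_restrict s)

variable {lam : Measure (ℕ → Bool)}

lemma measure_cantorCylinder_le
    (hlam : ∀ (s : Finset ℕ) (σ : ℕ → Bool),
      lam {x | ∀ i ∈ s, x i = σ i} = (1/2 : ENNReal) ^ s.card)
    (s : Finset ℕ) (τ : s → Bool) :
    lam (cantorCylinder s τ) ≤ 2⁻¹ ^ s.card := by
  rcases (cantorCylinder s τ).eq_empty_or_nonempty with hempty | ⟨σ, hσ⟩
  · simp [hempty]
  · have hcyl : cantorCylinder s τ = {x | ∀ i ∈ s, x i = σ i} := by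
      ext x
      simp only [cantorCylinder, Set.mem_preimage, Set.mem_singleton_iff, Set.mem_ofPred_eq] at hσ ⊢
      rw [← hσ, funext_iff]
      exact ⟨fun h i hi => h ⟨i, hi⟩, fun h i => h i i.2⟩
    rw [hcyl, hlam, one_div]

lemma exists_clopen_partition_measure_le
    (hlam : ∀ (s : Finset ℕ) (σ : ℕ → Bool),
      lam {x | ∀ i ∈ s, x i = σ i} = (1/2 : ENNReal) ^ s.card)
    {ε : ENNReal} (hε : ε ≠ 0) :
    ∃ t : Finset (Set (ℕ → Bool)), (∀ K ∈ t, IsClopen K ∧ lam K ≤ ε) ∧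
      ⋃₀ (t : Set (Set (ℕ → Bool))) = Set.univ := by
  classical
  obtain ⟨n, hn⟩ := ENNReal.exists_inv_two_pow_lt hε
  let s := Finset.range n
  refine ⟨Finset.univ.image (cantorCylinder s), ?_, ?_⟩
  · simp only [Finset.mem_image, Finset.mem_univ, true_and, forall_exists_index,
      forall_apply_eq_imp_iff]
    intro τ
    refine ⟨isClopen_cantorCylinder s τ, ?_⟩
    calc lam (cantorCylinder s τ) ≤ 2⁻¹ ^ s.card := measure_cantorCylinder_le hlam s τ
      _ = 2⁻¹ ^ n := by rw [Finset.card_range]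
      _ ≤ ε := hn.le
  · refine Set.eq_univ_of_forall fun x => ?_
    simp only [Finset.coe_image, Finset.coe_univ, Set.image_univ, Set.sUnion_range,
      Set.mem_iUnion, cantorCylinder, Set.mem_preimage, Set.mem_singleton_iff, exists_eq']

end CylinderPartition

lemma symmDiff_eq_sUnion_pieces {α : Type*} [DecidableEq (Set α)] {C D F : Set α}
    {t : Finset (Set α)} (ht : ⋃₀ (t : Set (Set α)) = Set.univ) :
    symmDiff (C ∩ D) F = ⋃₀ ↑(insert (F \ (C ∩ D)) (t.image fun K => (C ∩ K ∩ D) \ F)) := by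
  ext x
  obtain ⟨K, hK, hxK⟩ := Set.mem_sUnion.1 (ht ▸ Set.mem_univ x)
  simp only [Finset.coe_insert, Set.sUnion_insert, Finset.coe_image, Set.sUnion_image,
    Set.mem_union, Set.mem_iUnion, Set.mem_symmDiff, Set.mem_sdiff, Set.mem_inter_iff,
    Finset.mem_coe, exists_prop]
  constructor
  · rintro (⟨⟨hxC, hxD⟩, hxF⟩ | h)
    · exact Or.inr ⟨K, hK, ⟨⟨hxC, hxK⟩, hxD⟩, hxF⟩
    · exact Or.inl h
  · rintro (h | ⟨-, -, ⟨⟨hxC, -⟩, hxD⟩, hxF⟩)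
    · exact Or.inr h
    · exact Or.inl ⟨⟨hxC, hxD⟩, hxF⟩

section Alg0

variable {D A B C F : Set (ℕ → Bool)}

lemma inter_mem_alg0_of_isClopen (hC : IsClopen C) : C ∩ D ∈ alg0 D :=
  fun _ h𝔇 => h𝔇.1 C hC

lemma mem_alg0_of_finite (hF : F.Finite) (hFD : F ⊆ D) : F ∈ alg0 D :=
  fun _ h𝔇 => h𝔇.2.1 F hF hFD

lemma inter_mem_alg0 (hA : A ∈ alg0 D) (hB : B ∈ alg0 D) : A ∩ B ∈ alg0 D :=
  fun 𝔇 h𝔇 => h𝔇.2.2.2.1 A (hA 𝔇 h𝔇) B (hB 𝔇 h𝔇)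

lemma sdiff_mem_alg0 (hA : A ∈ alg0 D) : D \ A ∈ alg0 D :=
  fun 𝔇 h𝔇 => h𝔇.2.2.2.2 A (hA 𝔇 h𝔇)

lemma inter_sdiff_mem_alg0 (hC : IsClopen C) (hF : F.Finite) (hFD : F ⊆ D) :
    (C ∩ D) \ F ∈ alg0 D := by
  convert inter_mem_alg0 (inter_mem_alg0_of_isClopen hC)
    (sdiff_mem_alg0 (mem_alg0_of_finite hF hFD)) using 1
  ext x
  simp only [Set.mem_sdiff, Set.mem_inter_iff]
  tauto

/-- The sets `⊆ D` that differ from a clopen trace by a finite set form an algebra on `D`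
containing the generators. -/
lemma subset_and_finite_symmDiff_of_mem_alg0 (hA : A ∈ alg0 D) :
    A ⊆ D ∧ ∃ C : Set (ℕ → Bool), IsClopen C ∧ (symmDiff A (C ∩ D)).Finite := by
  refine hA {A | A ⊆ D ∧ ∃ C, IsClopen C ∧ (symmDiff A (C ∩ D)).Finite}
    ⟨?_, ?_, ?_, ?_, ?_⟩
  · exact fun C hC => ⟨Set.inter_subset_right, C, hC, by simp⟩
  · refine fun F hF hFD => ⟨hFD, ∅, isClopen_empty, ?_⟩
    rwa [Set.empty_inter, show symmDiff F ∅ = F from symmDiff_bot F]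
  · rintro A ⟨hAD, C₁, hC₁, hF₁⟩ B ⟨hBD, C₂, hC₂, hF₂⟩
    refine ⟨Set.union_subset hAD hBD, C₁ ∪ C₂, hC₁.union hC₂, (hF₁.union hF₂).subset ?_⟩
    intro x
    simp only [Set.mem_symmDiff, Set.mem_union, Set.mem_inter_iff]
    tauto
  · rintro A ⟨hAD, C₁, hC₁, hF₁⟩ B ⟨-, C₂, hC₂, hF₂⟩
    refine ⟨fun x hx => hAD hx.1, C₁ ∩ C₂, hC₁.inter hC₂, (hF₁.union hF₂).subset ?_⟩
    intro x
    simp only [Set.mem_symmDiff, Set.mem_union, Set.mem_inter_iff]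
    tauto
  · rintro A ⟨-, C, hC, hF⟩
    refine ⟨Set.sdiff_subset, Cᶜ, hC.compl, hF.subset ?_⟩
    intro x
    simp only [Set.mem_symmDiff, Set.mem_sdiff, Set.mem_inter_iff, Set.mem_compl_iff]
    tauto

lemma exists_eq_symmDiff_of_mem_alg0 (hA : A ∈ alg0 D) :
    ∃ C F : Set (ℕ → Bool), IsClopen C ∧ F.Finite ∧ F ⊆ D ∧ A = symmDiff (C ∩ D) F := by
  obtain ⟨hAD, C, hC, hF⟩ := subset_and_finite_symmDiff_of_mem_alg0 hA
  refine ⟨C, symmDiff A (C ∩ D), hC, hF, ?_, ?_⟩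
  · exact Set.symmDiff_subset_union.trans (Set.union_subset hAD Set.inter_subset_right)
  · rw [symmDiff_comm A, symmDiff_symmDiff_cancel_left]

end Alg0

section Mu0

variable {lam : Measure (ℕ → Bool)} {D C F : Set (ℕ → Bool)} {μ₀ : Set (ℕ → Bool) → ℝ}

lemma mu0_inter_sdiff (hμ₀ : ∀ C F : Set (ℕ → Bool), IsClopen C → F.Finite → F ⊆ D →
      μ₀ (symmDiff (C ∩ D) F) = (lam C).toReal)
    (hC : IsClopen C) (hF : F.Finite) : μ₀ ((C ∩ D) \ F) = (lam C).toReal := by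
  rw [← hμ₀ C (F ∩ (C ∩ D)) hC (hF.inter_of_left _) (fun x hx => hx.2.2),
    symmDiff_of_ge Set.inter_subset_right, Set.sdiff_inter_self_eq_sdiff]

lemma mu0_of_finite (hμ₀ : ∀ C F : Set (ℕ → Bool), IsClopen C → F.Finite → F ⊆ D →
      μ₀ (symmDiff (C ∩ D) F) = (lam C).toReal)
    (hF : F.Finite) (hFD : F ⊆ D) : μ₀ F = 0 := by
  have h := hμ₀ ∅ F isClopen_empty hF hFD
  rwa [Set.empty_inter, show symmDiff ∅ F = F from bot_symmDiff F, measure_empty,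
    ENNReal.toReal_zero] at h

end Mu0

theorem stmt_10_general (lam : Measure (ℕ → Bool))
    (hlam : ∀ (s : Finset ℕ) (σ : ℕ → Bool),
      lam {x | ∀ i ∈ s, x i = σ i} = (1/2 : ENNReal) ^ s.card)
    (D : Set (ℕ → Bool))
    (μ₀ : Set (ℕ → Bool) → ℝ)
    (hμ₀ : ∀ C F : Set (ℕ → Bool), IsClopen C → F.Finite → F ⊆ D →
      μ₀ (symmDiff (C ∩ D) F) = (lam C).toReal) :
    ∀ A ∈ alg0 D, ∀ ε : ℝ, 0 < ε →
      ∃ t : Finset (Set (ℕ → Bool)),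
        (∀ B ∈ t, B ∈ alg0 D ∧ μ₀ B ≤ ε) ∧ A = ⋃₀ ↑t := by
  classical
  intro A hA ε hε
  obtain ⟨C, F, hC, hF, hFD, rfl⟩ := exists_eq_symmDiff_of_mem_alg0 hA
  obtain ⟨t, ht, htU⟩ := exists_clopen_partition_measure_le hlam (ENNReal.ofReal_pos.2 hε).ne'
  refine ⟨_, ?_, symmDiff_eq_sUnion_pieces htU⟩
  simp only [Finset.mem_insert, Finset.mem_image, forall_eq_or_imp, forall_exists_index,
    and_imp, forall_apply_eq_imp_iff₂]
  refine ⟨⟨mem_alg0_of_finite hF.sdiff (Set.sdiff_subset.trans hFD), ?_⟩, fun K hK => ?_⟩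
  · rw [mu0_of_finite hμ₀ hF.sdiff (Set.sdiff_subset.trans hFD)]
    exact hε.le
  · refine ⟨inter_sdiff_mem_alg0 (hC.inter (ht K hK).1) hF hFD, ?_⟩
    rw [mu0_inter_sdiff hμ₀ (hC.inter (ht K hK).1) hF]
    exact ENNReal.toReal_le_of_le_ofReal hε.le
      ((measure_mono Set.inter_subset_right).trans (ht K hK).2)

/-- μ₀ is nonatomic: every A ∈ 𝔄₀ is a finite union of elements
of 𝔄₀ of measure at most ε. -/
theorem stmt_10 (lam : Measure (ℕ → Bool))
    (hlam : ∀ (s : Finset ℕ) (σ : ℕ → Bool),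
      lam {x | ∀ i ∈ s, x i = σ i} = (1/2 : ENNReal) ^ s.card)
    (D : Set (ℕ → Bool)) (hDc : D.Countable) (hDd : Dense D)
    (μ₀ : Set (ℕ → Bool) → ℝ)
    (hμ₀ : ∀ C F : Set (ℕ → Bool), IsClopen C → F.Finite → F ⊆ D →
      μ₀ (symmDiff (C ∩ D) F) = (lam C).toReal) :
    ∀ A ∈ alg0 D, ∀ ε : ℝ, 0 < ε →
      ∃ t : Finset (Set (ℕ → Bool)),
        (∀ B ∈ t, B ∈ alg0 D ∧ μ₀ B ≤ ε) ∧ A = ⋃₀ ↑t :=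
  stmt_10_general lam hlam D μ₀ hμ₀
end

section
/- Let 𝔅 be an algebra of subsets of ω, ν a finitely additive probability measure on 𝔅, and X ⊆ ω. Suppose the extension ν̃ of ν to 𝔅[X] defined by ν̃((A ∩ X) ∪ (A' \ X)) = ν_*(A ∩ X) + ν^*(A' \ X) satisfies: for all A ∈ 𝔅, ν_*(A ∩ X) > 0 whenever A ∩ X is infinite, and ν^*(A \ X) > 0 whenever A \ X is infinite. If ν is almost strictly positive on 𝔅 and 𝔅 contains all finite sets, then ν̃ is almost strictly positive on 𝔅[X] (ν̃(Y) = 0 iff Y is finite, for Y ∈ 𝔅[X]). -/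
/-- Inner measure. -/
noncomputable def innerM (𝔅 : Set (Set ℕ)) (ν : Set ℕ → ℝ) (Z : Set ℕ) : ℝ :=
  sSup {x : ℝ | ∃ A ∈ 𝔅, A ⊆ Z ∧ ν A = x}

/-- Outer measure. -/
noncomputable def outerM (𝔅 : Set (Set ℕ)) (ν : Set ℕ → ℝ) (Z : Set ℕ) : ℝ :=
  sInf {x : ℝ | ∃ A ∈ 𝔅, Z ⊆ A ∧ ν A = x}

/-- if the Łoś–Marczewski extension ν̃ satisfies conditions (i)
and (ii), then ν̃ is almost strictly positive on 𝔅[X]. -/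
theorem stmt_13 (𝔅 : Set (Set ℕ)) (ν : Set ℕ → ℝ) (X : Set ℕ) (ν' : Set ℕ → ℝ)
    (hempt : ∅ ∈ 𝔅) (huniv : Set.univ ∈ 𝔅)
    (hunion : ∀ A ∈ 𝔅, ∀ B ∈ 𝔅, A ∪ B ∈ 𝔅)
    (hinter : ∀ A ∈ 𝔅, ∀ B ∈ 𝔅, A ∩ B ∈ 𝔅)
    (hcompl : ∀ A ∈ 𝔅, Aᶜ ∈ 𝔅)
    (hfin : ∀ F : Set ℕ, F.Finite → F ∈ 𝔅)
    (hnonneg : ∀ A ∈ 𝔅, 0 ≤ ν A) (hprob : ν Set.univ = 1)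
    (hadd : ∀ A ∈ 𝔅, ∀ B ∈ 𝔅, Disjoint A B → ν (A ∪ B) = ν A + ν B)
    (hasp : ∀ A ∈ 𝔅, ν A = 0 ↔ A.Finite)
    -- ν' is the extension of ν given by the Łoś–Marczewski formula
    (hext : ∀ A ∈ 𝔅, ∀ A' ∈ 𝔅,
      ν' ((A ∩ X) ∪ (A' \ X)) = innerM 𝔅 ν (A ∩ X) + outerM 𝔅 ν (A' \ X))
    -- condition (i)
    (hi : ∀ A ∈ 𝔅, (A ∩ X).Infinite → 0 < innerM 𝔅 ν (A ∩ X))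
    -- condition (ii)
    (hii : ∀ A ∈ 𝔅, (A \ X).Infinite → 0 < outerM 𝔅 ν (A \ X)) :
    ∀ Y : Set ℕ, (∃ A ∈ 𝔅, ∃ A' ∈ 𝔅, Y = (A ∩ X) ∪ (A' \ X)) →
      (ν' Y = 0 ↔ Y.Finite) := by
  rintro Y ⟨A, hA, A', hA', rfl⟩
  have hν0 : ν ∅ = 0 := (hasp ∅ hempt).mpr Set.finite_empty
  have hle1 : ∀ B ∈ 𝔅, ν B ≤ 1 := by
    intro B hB
    have h := hadd B hB Bᶜ (hcompl B hB) disjoint_compl_right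
    rw [Set.union_compl_self, hprob] at h
    linarith [hnonneg Bᶜ (hcompl B hB)]
  -- inner measure facts
  have hSne : ∀ Z : Set ℕ, (0:ℝ) ∈ {x : ℝ | ∃ A ∈ 𝔅, A ⊆ Z ∧ ν A = x} := by
    intro Z; exact ⟨∅, hempt, Set.empty_subset _, hν0⟩
  have hSbdd : ∀ Z : Set ℕ, BddAbove {x : ℝ | ∃ A ∈ 𝔅, A ⊆ Z ∧ ν A = x} := by
    intro Z; exact ⟨1, by rintro x ⟨B, hB, _, rfl⟩; exact hle1 B hB⟩
  have hinner_nonneg : ∀ Z : Set ℕ, 0 ≤ innerM 𝔅 ν Z := by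
    intro Z; exact le_csSup (hSbdd Z) (hSne Z)
  have houter_nonneg : ∀ Z : Set ℕ, 0 ≤ outerM 𝔅 ν Z := by
    intro Z
    have hne : (1:ℝ) ∈ {x : ℝ | ∃ A ∈ 𝔅, Z ⊆ A ∧ ν A = x} :=
      ⟨Set.univ, huniv, Set.subset_univ _, hprob⟩
    apply le_csInf ⟨1, hne⟩
    rintro x ⟨B, hB, _, rfl⟩; exact hnonneg B hB
  have hinner_fin : ∀ Z : Set ℕ, Z.Finite → innerM 𝔅 ν Z = 0 := by
    intro Z hZ
    apply le_antisymm
    · apply csSup_le ⟨0, hSne Z⟩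
      rintro x ⟨B, hB, hBZ, rfl⟩
      exact le_of_eq ((hasp B hB).mpr (hZ.subset hBZ))
    · exact hinner_nonneg Z
  have houter_fin : ∀ Z : Set ℕ, Z.Finite → outerM 𝔅 ν Z = 0 := by
    intro Z hZ
    apply le_antisymm
    · apply csInf_le ⟨0, by rintro x ⟨B, hB, _, rfl⟩; exact hnonneg B hB⟩
      exact ⟨Z, hfin Z hZ, subset_rfl, (hasp Z (hfin Z hZ)).mpr hZ⟩
    · exact houter_nonneg Z
  rw [hext A hA A' hA']
  constructor
  · intro h
    by_contra hinfY
    have hinfY' : (A ∩ X ∪ A' \ X).Infinite := hinfY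
    rcases Set.infinite_union.mp hinfY' with hI | hI
    · have := hi A hA hI
      linarith [houter_nonneg (A' \ X)]
    · have := hii A' hA' hI
      linarith [hinner_nonneg (A ∩ X)]
  · intro h
    rw [Set.finite_union] at h
    rw [hinner_fin _ h.1, houter_fin _ h.2, add_zero]
end

section
/- Let 𝔄 be a Boolean algebra of subsets of a countable set D carrying a finitely additive probability measure μ that is almost strictly positive (μ(A) = 0 iff A is finite) and such that 𝔄/fin is not σ-centred. Then the Stone space K of 𝔄 is a compactification of the discrete space D whose remainder K \ D is non-separable and carries a strictly positive regular Borel probability measure. -/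
open MeasureTheory

/-- Ultrafilters on an algebra 𝔄 of subsets of D. -/
def IsUltrafilterOn {D : Type*} (𝔄 : Set (Set D)) (u : Set (Set D)) : Prop :=
  u ⊆ 𝔄 ∧ Set.univ ∈ u ∧ ∅ ∉ u ∧
  (∀ A ∈ u, ∀ B ∈ u, A ∩ B ∈ u) ∧
  (∀ A ∈ u, ∀ B ∈ 𝔄, A ⊆ B → B ∈ u) ∧
  (∀ A ∈ 𝔄, A ∈ u ∨ Aᶜ ∈ u)

/-- The Stone space K of 𝔄: the space of ultrafilters on 𝔄. -/
def StoneOf {D : Type*} (𝔄 : Set (Set D)) : Type _ :=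
  {u : Set (Set D) // IsUltrafilterOn 𝔄 u}

/-- The Stone topology on K, generated by the basic (cl)open sets
{u : A ∈ u} for A ∈ 𝔄. -/
instance stoneTop {D : Type*} (𝔄 : Set (Set D)) : TopologicalSpace (StoneOf 𝔄) :=
  TopologicalSpace.generateFrom
    {V : Set (StoneOf 𝔄) | ∃ A ∈ 𝔄, V = {u : StoneOf 𝔄 | A ∈ u.1}}

instance stoneMeas {D : Type*} (𝔄 : Set (Set D)) :
    MeasurableSpace (StoneOf 𝔄) := borel _

/-- The remainder K \ D: the set of nonprincipal ultrafilters on 𝔄. -/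
def stoneRemainder {D : Type*} (𝔄 : Set (Set D)) : Set (StoneOf 𝔄) :=
  {u : StoneOf 𝔄 | ∀ A ∈ u.1, A.Infinite}

/-- 𝔄/fin is σ-centred. -/
def SigmaCentredModFin {D : Type*} (𝔄 : Set (Set D)) : Prop :=
  ∃ C : ℕ → Set (Set D), (∀ n, C n ⊆ 𝔄) ∧
    (∀ A ∈ 𝔄, A.Infinite → ∃ n, A ∈ C n) ∧
    (∀ n, ∀ t : Finset (Set D), ↑t ⊆ C n → (⋂₀ (t : Set (Set D))).Infinite)

/-!
An ultrafilter `𝒰` on the Stone space converges to the point `{A ∈ 𝔄 | {u | A ∈ u} ∈ 𝒰}`, so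
the space is compact; `D` sits inside as the principal ultrafilters, `d` being isolated by the
basic clopen set of `{d}`. Every infinite `A ∈ 𝔄` lies in some nonprincipal ultrafilter, so the
ultrafilters of a countable dense subset of the remainder would be countably many centred families
covering all infinite members of `𝔄`.

For the measure, `K ↦ inf {μ B | K ⊆ W B}`, with `W B = remainderBasicOpen 𝔄 B`,
is a content on the remainder: it is additive on disjoint compacta because these are separated by
some `W S`. If `W A ⊆ W B` then `A \ B` is finite, hence `μ`-null, so the content of `W A` is
exactly `μ A`; this gives total mass `1`, and strict positivity since a nonempty open set contains
some `W A` with `A` infinite.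
-/

open Filter Topology TopologicalSpace Set
open scoped NNReal ENNReal

namespace MeasureTheory

theorem addContent_le_of_sdiff_eq_zero {α G : Type*} [AddCommMonoid G] [PartialOrder G]
    [CanonicallyOrderedAdd G] {C : Set (Set α)} (hC : IsSetRing C) {m : AddContent G C}
    {s t : Set α} (hs : s ∈ C) (ht : t ∈ C) (hst : m (s \ t) = 0) : m s ≤ m t :=
  calc m s = m (s ∩ t) + m (s \ t) := by
        rw [← addContent_union hC (hC.inter_mem hs ht) (hC.sdiff_mem hs ht)
          disjoint_sdiff_inter.symm, inter_union_sdiff]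
    _ ≤ m t := by
        rw [hst, add_zero]
        exact addContent_mono hC.isSetSemiring (hC.inter_mem hs ht) ht inter_subset_right

end MeasureTheory

namespace StoneOf

variable {D : Type*} {𝔄 : Set (Set D)} {A B : Set D} {u v : StoneOf 𝔄}

lemma val_subset (u : StoneOf 𝔄) : u.1 ⊆ 𝔄 := u.2.1

lemma univ_mem (u : StoneOf 𝔄) : univ ∈ u.1 := u.2.2.1

lemma empty_notMem (u : StoneOf 𝔄) : ∅ ∉ u.1 := u.2.2.2.1

lemma inter_mem (hA : A ∈ u.1) (hB : B ∈ u.1) : A ∩ B ∈ u.1 := u.2.2.2.2.1 A hA B hB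

lemma mem_of_superset (hA : A ∈ u.1) (hB : B ∈ 𝔄) (hAB : A ⊆ B) : B ∈ u.1 :=
  u.2.2.2.2.2.1 A hA B hB hAB

lemma mem_or_compl_mem (hA : A ∈ 𝔄) : A ∈ u.1 ∨ Aᶜ ∈ u.1 := u.2.2.2.2.2.2 A hA

lemma compl_notMem (hA : A ∈ u.1) : Aᶜ ∉ u.1 := fun hAc =>
  u.empty_notMem (by simpa using inter_mem hA hAc)

lemma compl_mem_iff (hA : A ∈ 𝔄) : Aᶜ ∈ u.1 ↔ A ∉ u.1 :=
  ⟨fun hAc hA' => compl_notMem hA' hAc, (mem_or_compl_mem hA).resolve_left⟩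

lemma union_mem_iff (h𝔄 : IsSetAlgebra 𝔄) (hA : A ∈ 𝔄) (hB : B ∈ 𝔄) :
    A ∪ B ∈ u.1 ↔ A ∈ u.1 ∨ B ∈ u.1 := by
  refine ⟨fun hAB => ?_, ?_⟩
  · by_contra! h
    have hc : (A ∪ B)ᶜ ∈ u.1 := by
      rw [compl_union]
      exact inter_mem ((compl_mem_iff hA).2 h.1) ((compl_mem_iff hB).2 h.2)
    exact compl_notMem hAB hc
  · rintro (h | h)
    · exact mem_of_superset h (h𝔄.union_mem hA hB) subset_union_left
    · exact mem_of_superset h (h𝔄.union_mem hA hB) subset_union_right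

lemma nonempty_of_mem (hA : A ∈ u.1) : A.Nonempty :=
  nonempty_iff_ne_empty.2 fun h => u.empty_notMem (h ▸ hA)

lemma sInter_mem (t : Finset (Set D)) (ht : ↑t ⊆ u.1) : ⋂₀ (t : Set (Set D)) ∈ u.1 := by
  classical
  induction t using Finset.induction_on with
  | empty => simpa using u.univ_mem
  | insert A t _ ih =>
    rw [Finset.coe_insert, insert_subset_iff] at ht
    rw [Finset.coe_insert, sInter_insert]
    exact inter_mem ht.1 (ih ht.2)

lemma exists_mem_compl_mem_of_ne (h : u ≠ v) : ∃ A, A ∈ u.1 ∧ Aᶜ ∈ v.1 := by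
  by_contra! hsep
  refine h (Subtype.ext (Set.ext fun A => ⟨fun hA => ?_, fun hA => ?_⟩))
  · exact (mem_or_compl_mem (u.val_subset hA)).resolve_right (hsep A hA)
  · by_contra hAu
    exact hsep Aᶜ ((compl_mem_iff (v.val_subset hA)).2 hAu) (by rwa [compl_compl])

def basicOpen (𝔄 : Set (Set D)) (A : Set D) : Set (StoneOf 𝔄) := {u | A ∈ u.1}

@[simp] lemma mem_basicOpen : u ∈ basicOpen 𝔄 A ↔ A ∈ u.1 := Iff.rfl

lemma isOpen_basicOpen (hA : A ∈ 𝔄) : IsOpen (basicOpen 𝔄 A) :=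
  isOpen_generateFrom_of_mem ⟨A, hA, rfl⟩

lemma basicOpen_univ : basicOpen 𝔄 univ = univ := eq_univ_of_forall univ_mem

lemma basicOpen_empty : basicOpen 𝔄 ∅ = ∅ := eq_empty_of_forall_notMem empty_notMem

lemma basicOpen_mono (hB : B ∈ 𝔄) (hAB : A ⊆ B) : basicOpen 𝔄 A ⊆ basicOpen 𝔄 B :=
  fun _ hu => mem_of_superset hu hB hAB

lemma basicOpen_compl (hA : A ∈ 𝔄) : basicOpen 𝔄 Aᶜ = (basicOpen 𝔄 A)ᶜ :=
  Set.ext fun _ => compl_mem_iff hA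

lemma basicOpen_inter (hA : A ∈ 𝔄) (hB : B ∈ 𝔄) :
    basicOpen 𝔄 (A ∩ B) = basicOpen 𝔄 A ∩ basicOpen 𝔄 B :=
  Subset.antisymm (subset_inter (basicOpen_mono hA inter_subset_left)
    (basicOpen_mono hB inter_subset_right)) fun _ hu => inter_mem hu.1 hu.2

lemma basicOpen_union (h𝔄 : IsSetAlgebra 𝔄) (hA : A ∈ 𝔄) (hB : B ∈ 𝔄) :
    basicOpen 𝔄 (A ∪ B) = basicOpen 𝔄 A ∪ basicOpen 𝔄 B :=
  Set.ext fun _ => union_mem_iff h𝔄 hA hB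

lemma isClosed_basicOpen (h𝔄 : IsSetAlgebra 𝔄) (hA : A ∈ 𝔄) : IsClosed (basicOpen 𝔄 A) := by
  rw [← isOpen_compl_iff, ← basicOpen_compl hA]
  exact isOpen_basicOpen (h𝔄.compl_mem hA)

lemma isTopologicalBasis_basicOpen (h𝔄 : IsSetAlgebra 𝔄) :
    IsTopologicalBasis {V | ∃ A ∈ 𝔄, V = basicOpen 𝔄 A} := by
  refine ⟨?_, ?_, rfl⟩
  · rintro _ ⟨A, hA, rfl⟩ _ ⟨B, hB, rfl⟩ u hu
    exact ⟨_, ⟨A ∩ B, h𝔄.inter_mem hA hB, rfl⟩, inter_mem hu.1 hu.2,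
      (basicOpen_inter hA hB).subset⟩
  · exact sUnion_eq_univ_iff.2 fun u => ⟨_, ⟨univ, h𝔄.univ_mem, rfl⟩, u.univ_mem⟩

instance : T2Space (StoneOf 𝔄) where
  t2 _ _ huv := by
    obtain ⟨A, hA, hAc⟩ := exists_mem_compl_mem_of_ne huv
    refine ⟨basicOpen 𝔄 A, basicOpen 𝔄 Aᶜ, isOpen_basicOpen (val_subset _ hA),
      isOpen_basicOpen (val_subset _ hAc), hA, hAc, disjoint_left.2 fun w hw hw' => ?_⟩
    exact compl_notMem hw hw'

instance : BorelSpace (StoneOf 𝔄) := ⟨rfl⟩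

def ultrafilterLimit (h𝔄 : IsSetAlgebra 𝔄) (𝒰 : Ultrafilter (StoneOf 𝔄)) : StoneOf 𝔄 :=
  ⟨{A | A ∈ 𝔄 ∧ basicOpen 𝔄 A ∈ 𝒰}, fun _ hA => hA.1,
    ⟨h𝔄.univ_mem, by rw [basicOpen_univ]; exact Filter.univ_mem⟩,
    fun h => by simpa [basicOpen_empty] using h.2,
    fun _ hA _ hB => ⟨h𝔄.inter_mem hA.1 hB.1, by
      rw [basicOpen_inter hA.1 hB.1]; exact Filter.inter_mem hA.2 hB.2⟩,
    fun _ hA _ hB hAB => ⟨hB, Filter.mem_of_superset hA.2 (basicOpen_mono hB hAB)⟩,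
    fun A hA => (𝒰.mem_or_compl_mem (basicOpen 𝔄 A)).imp (⟨hA, ·⟩)
      fun h => ⟨h𝔄.compl_mem hA, by rwa [basicOpen_compl hA]⟩⟩

lemma le_nhds_ultrafilterLimit (h𝔄 : IsSetAlgebra 𝔄) (𝒰 : Ultrafilter (StoneOf 𝔄)) :
    ↑𝒰 ≤ 𝓝 (ultrafilterLimit h𝔄 𝒰) := by
  rw [nhds_generateFrom]
  refine le_iInf₂ fun _ ⟨hu, _, _, hV⟩ => le_principal_iff.2 ?_
  subst hV
  exact hu.2

lemma compactSpace (h𝔄 : IsSetAlgebra 𝔄) : CompactSpace (StoneOf 𝔄) :=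
  ⟨isCompact_iff_ultrafilter_le_nhds'.2 fun 𝒰 _ =>
    ⟨_, mem_univ _, le_nhds_ultrafilterLimit h𝔄 𝒰⟩⟩

def ofUltrafilter (h𝔄 : IsSetAlgebra 𝔄) (U : Ultrafilter D) : StoneOf 𝔄 :=
  ⟨{A | A ∈ 𝔄 ∧ A ∈ U}, fun _ hA => hA.1, ⟨h𝔄.univ_mem, Filter.univ_mem⟩,
    fun h => U.empty_notMem h.2,
    fun _ hA _ hB => ⟨h𝔄.inter_mem hA.1 hB.1, Filter.inter_mem hA.2 hB.2⟩,
    fun _ hA _ hB hAB => ⟨hB, Filter.mem_of_superset hA.2 hAB⟩,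
    fun A hA => (U.mem_or_compl_mem A).imp (⟨hA, ·⟩) (⟨h𝔄.compl_mem hA, ·⟩)⟩

@[simp] lemma mem_ofUltrafilter_pure (h𝔄 : IsSetAlgebra 𝔄) {d : D} :
    A ∈ (ofUltrafilter h𝔄 (pure d)).1 ↔ A ∈ 𝔄 ∧ d ∈ A := Iff.rfl

lemma ofUltrafilter_mem_stoneRemainder (h𝔄 : IsSetAlgebra 𝔄) {U : Ultrafilter D}
    (hU : (U : Filter D) ≤ cofinite) : ofUltrafilter h𝔄 U ∈ stoneRemainder 𝔄 := fun _ hA =>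
  frequently_cofinite_iff_infinite.1 ((U.frequently_iff_eventually.2 hA.2).filter_mono hU)

lemma exists_mem_stoneRemainder (h𝔄 : IsSetAlgebra 𝔄) (hA : A ∈ 𝔄) (hinf : A.Infinite) :
    ∃ u ∈ stoneRemainder 𝔄, A ∈ u.1 := by
  have := hinf.cofinite_inf_principal_neBot
  have hle := Ultrafilter.of_le (cofinite ⊓ 𝓟 A)
  exact ⟨_, ofUltrafilter_mem_stoneRemainder h𝔄 (hle.trans inf_le_left),
    hA, hle (mem_inf_of_right (mem_principal_self A))⟩

lemma eq_ofUltrafilter_pure (h𝔄 : IsSetAlgebra 𝔄) {d : D} (hd : {d} ∈ u.1) :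
    u = ofUltrafilter h𝔄 (pure d) := by
  refine Subtype.ext (Set.ext fun A => ?_)
  rw [mem_ofUltrafilter_pure]
  refine ⟨fun hA => ⟨u.val_subset hA, ?_⟩,
    fun hA => mem_of_superset hd hA.1 (singleton_subset_iff.2 hA.2)⟩
  by_contra hdA
  exact u.empty_notMem (inter_singleton_eq_empty.2 hdA ▸ inter_mem hA hd)

lemma basicOpen_singleton (h𝔄 : IsSetAlgebra 𝔄) {d : D} (hd : {d} ∈ 𝔄) :
    basicOpen 𝔄 {d} = {ofUltrafilter h𝔄 (pure d)} :=
  Set.ext fun _ => ⟨eq_ofUltrafilter_pure h𝔄, by rintro rfl; exact ⟨hd, rfl⟩⟩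

lemma ofUltrafilter_pure_injective (h𝔄 : IsSetAlgebra 𝔄) (hsing : ∀ d : D, {d} ∈ 𝔄) :
    Function.Injective fun d : D => ofUltrafilter h𝔄 (pure d) := by
  intro d₁ d₂ h
  have hmem : {d₁} ∈ (ofUltrafilter h𝔄 (pure d₂)).1 := by
    rw [← show ofUltrafilter h𝔄 (pure d₁) = ofUltrafilter h𝔄 (pure d₂) from h]
    exact (mem_ofUltrafilter_pure h𝔄).2 ⟨hsing d₁, rfl⟩
  exact (mem_singleton_iff.1 ((mem_ofUltrafilter_pure h𝔄).1 hmem).2).symm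

lemma denseRange_ofUltrafilter_pure (h𝔄 : IsSetAlgebra 𝔄) :
    DenseRange fun d : D => ofUltrafilter h𝔄 (pure d) := by
  refine (isTopologicalBasis_basicOpen h𝔄).dense_iff.2 ?_
  rintro _ ⟨A, hA, rfl⟩ ⟨u, hu⟩
  obtain ⟨d, hd⟩ := nonempty_of_mem hu
  exact ⟨_, (mem_ofUltrafilter_pure h𝔄).2 ⟨hA, hd⟩, d, rfl⟩

lemma isClosed_stoneRemainder (hfin : ∀ F : Set D, F.Finite → F ∈ 𝔄) :
    IsClosed (stoneRemainder 𝔄) := by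
  have h : stoneRemainder 𝔄 = ⋂ F : {F : Set D // F.Finite}, basicOpen 𝔄 (F : Set D)ᶜ := by
    ext u
    simp only [stoneRemainder, mem_ofPred_eq, mem_iInter, mem_basicOpen, Subtype.forall]
    exact ⟨fun hu F hF => (compl_mem_iff (hfin F hF)).2 fun hFu => hu F hFu hF,
      fun hu A hA hAfin => compl_notMem hA (hu A hAfin)⟩
  rw [h]
  refine isClosed_iInter fun F => ?_
  rw [basicOpen_compl (hfin _ F.2)]
  exact (isOpen_basicOpen (hfin _ F.2)).isClosed_compl

lemma compactSpace_stoneRemainder (h𝔄 : IsSetAlgebra 𝔄)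
    (hfin : ∀ F : Set D, F.Finite → F ∈ 𝔄) : CompactSpace (stoneRemainder 𝔄) :=
  haveI := compactSpace h𝔄
  isCompact_iff_compactSpace.1 (isClosed_stoneRemainder hfin).isCompact

lemma exists_basicOpen_between (h𝔄 : IsSetAlgebra 𝔄) {C O : Set (StoneOf 𝔄)}
    (hC : IsCompact C) (hO : IsOpen O) (hCO : C ⊆ O) :
    ∃ B ∈ 𝔄, C ⊆ basicOpen 𝔄 B ∧ basicOpen 𝔄 B ⊆ O := by
  let ι := {B // B ∈ 𝔄 ∧ basicOpen 𝔄 B ⊆ O}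
  have : Nonempty ι := ⟨⟨∅, h𝔄.empty_mem, by simp [basicOpen_empty]⟩⟩
  have hcover : C ⊆ ⋃ B : ι, basicOpen 𝔄 B.1 := fun u hu => by
    obtain ⟨_, ⟨A, hA, rfl⟩, huA, hAO⟩ :=
      (isTopologicalBasis_basicOpen h𝔄).exists_subset_of_mem_open (hCO hu) hO
    exact mem_iUnion.2 ⟨⟨A, hA, hAO⟩, huA⟩
  have hdir : Directed (· ⊆ ·) fun B : ι => basicOpen 𝔄 B.1 := by
    rintro ⟨A, hA, hAO⟩ ⟨B, hB, hBO⟩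
    refine ⟨⟨A ∪ B, h𝔄.union_mem hA hB, ?_⟩, basicOpen_mono (h𝔄.union_mem hA hB)
      subset_union_left, basicOpen_mono (h𝔄.union_mem hA hB) subset_union_right⟩
    rw [basicOpen_union h𝔄 hA hB]
    exact union_subset hAO hBO
  obtain ⟨⟨B, hB, hBO⟩, hCB⟩ :=
    hC.elim_directed_cover _ (fun B : ι => isOpen_basicOpen B.2.1) hcover hdir
  exact ⟨B, hB, hCB, hBO⟩

lemma exists_basicOpen_separating (h𝔄 : IsSetAlgebra 𝔄) {C₁ C₂ : Set (StoneOf 𝔄)}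
    (h₁ : IsCompact C₁) (h₂ : IsCompact C₂) (hd : Disjoint C₁ C₂) :
    ∃ B ∈ 𝔄, C₁ ⊆ basicOpen 𝔄 B ∧ C₂ ⊆ basicOpen 𝔄 Bᶜ := by
  obtain ⟨B, hB, h₁B, hB₂⟩ :=
    exists_basicOpen_between h𝔄 h₁ h₂.isClosed.isOpen_compl hd.subset_compl_right
  refine ⟨B, hB, h₁B, ?_⟩
  rw [basicOpen_compl hB]
  exact subset_compl_comm.1 hB₂

def remainderBasicOpen (𝔄 : Set (Set D)) (A : Set D) : Set (stoneRemainder 𝔄) :=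
  (↑) ⁻¹' basicOpen 𝔄 A

lemma isOpen_remainderBasicOpen (hA : A ∈ 𝔄) : IsOpen (remainderBasicOpen 𝔄 A) :=
  (isOpen_basicOpen hA).preimage continuous_subtype_val

lemma isClosed_remainderBasicOpen (h𝔄 : IsSetAlgebra 𝔄) (hA : A ∈ 𝔄) :
    IsClosed (remainderBasicOpen 𝔄 A) :=
  (isClosed_basicOpen h𝔄 hA).preimage continuous_subtype_val

lemma remainderBasicOpen_univ : remainderBasicOpen 𝔄 univ = univ := by
  rw [remainderBasicOpen, basicOpen_univ, preimage_univ]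

lemma remainderBasicOpen_mono (hB : B ∈ 𝔄) (hAB : A ⊆ B) :
    remainderBasicOpen 𝔄 A ⊆ remainderBasicOpen 𝔄 B :=
  preimage_mono (basicOpen_mono hB hAB)

lemma sdiff_finite_of_remainderBasicOpen_subset (h𝔄 : IsSetAlgebra 𝔄) (hA : A ∈ 𝔄)
    (hB : B ∈ 𝔄) (hAB : remainderBasicOpen 𝔄 A ⊆ remainderBasicOpen 𝔄 B) : (A \ B).Finite := by
  by_contra hinf
  obtain ⟨u, hu, hABu⟩ := exists_mem_stoneRemainder h𝔄 (h𝔄.sdiff_mem hA hB) hinf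
  have hBu : B ∈ u.1 := hAB (show (⟨u, hu⟩ : stoneRemainder 𝔄) ∈ remainderBasicOpen 𝔄 A from
    mem_of_superset hABu hA sdiff_subset)
  exact compl_notMem hBu (mem_of_superset hABu (h𝔄.compl_mem hB) fun _ hx => hx.2)

section Content

noncomputable def coverInf (m : AddContent ℝ≥0 𝔄) (C : Set (stoneRemainder 𝔄)) : ℝ≥0 :=
  ⨅ B : {B // B ∈ 𝔄 ∧ C ⊆ remainderBasicOpen 𝔄 B}, m B

variable {m : AddContent ℝ≥0 𝔄} {C C₁ C₂ : Set (stoneRemainder 𝔄)}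

lemma coverInf_le (hB : B ∈ 𝔄) (hCB : C ⊆ remainderBasicOpen 𝔄 B) : coverInf m C ≤ m B :=
  ciInf_le (OrderBot.bddBelow _) (⟨B, hB, hCB⟩ : {B // B ∈ 𝔄 ∧ C ⊆ remainderBasicOpen 𝔄 B})

lemma nonempty_covers (h𝔄 : IsSetAlgebra 𝔄) (C : Set (stoneRemainder 𝔄)) :
    Nonempty {B // B ∈ 𝔄 ∧ C ⊆ remainderBasicOpen 𝔄 B} :=
  ⟨⟨univ, h𝔄.univ_mem, remainderBasicOpen_univ ▸ subset_univ C⟩⟩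

lemma le_coverInf (h𝔄 : IsSetAlgebra 𝔄) {a : ℝ≥0}
    (h : ∀ B ∈ 𝔄, C ⊆ remainderBasicOpen 𝔄 B → a ≤ m B) : a ≤ coverInf m C :=
  have := nonempty_covers h𝔄 C
  le_ciInf fun B => h B.1 B.2.1 B.2.2

lemma coverInf_mono (h𝔄 : IsSetAlgebra 𝔄) (h : C₁ ⊆ C₂) : coverInf m C₁ ≤ coverInf m C₂ :=
  le_coverInf h𝔄 fun _ hB hC₂ => coverInf_le hB (h.trans hC₂)

lemma coverInf_union_le (h𝔄 : IsSetAlgebra 𝔄) :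
    coverInf m (C₁ ∪ C₂) ≤ coverInf m C₁ + coverInf m C₂ := by
  have := nonempty_covers h𝔄 C₁
  have := nonempty_covers h𝔄 C₂
  refine NNReal.le_iInf_add_iInf fun ⟨B₁, hB₁, hC₁⟩ ⟨B₂, hB₂, hC₂⟩ => ?_
  have hB := h𝔄.union_mem hB₁ hB₂
  exact (coverInf_le hB (union_subset
      (hC₁.trans (remainderBasicOpen_mono hB subset_union_left))
      (hC₂.trans (remainderBasicOpen_mono hB subset_union_right)))).trans
    (addContent_union_le h𝔄.isSetRing hB₁ hB₂)

lemma coverInf_union_of_disjoint (h𝔄 : IsSetAlgebra 𝔄) (h₁ : IsCompact C₁) (h₂ : IsCompact C₂)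
    (hd : Disjoint C₁ C₂) : coverInf m (C₁ ∪ C₂) = coverInf m C₁ + coverInf m C₂ := by
  refine le_antisymm (coverInf_union_le h𝔄) (le_coverInf h𝔄 fun B hB hC => ?_)
  obtain ⟨S, hS, h₁S, h₂S⟩ := exists_basicOpen_separating h𝔄
    (h₁.image continuous_subtype_val) (h₂.image continuous_subtype_val)
    ((disjoint_image_iff Subtype.val_injective).2 hd)
  have hBS := h𝔄.inter_mem hB hS
  have hBSc := h𝔄.inter_mem hB (h𝔄.compl_mem hS)
  calc coverInf m C₁ + coverInf m C₂ ≤ m (B ∩ S) + m (B ∩ Sᶜ) :=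
        add_le_add (coverInf_le hBS fun u hu => inter_mem (hC (Or.inl hu)) (h₁S ⟨u, hu, rfl⟩))
          (coverInf_le hBSc fun u hu => inter_mem (hC (Or.inr hu)) (h₂S ⟨u, hu, rfl⟩))
    _ = m B := by
        rw [← addContent_union h𝔄.isSetRing hBS hBSc
          (disjoint_compl_right.mono inter_subset_right inter_subset_right), inter_union_compl]

lemma coverInf_remainderBasicOpen (h𝔄 : IsSetAlgebra 𝔄)
    (hm0 : ∀ A ∈ 𝔄, A.Finite → m A = 0) (hA : A ∈ 𝔄) :
    coverInf m (remainderBasicOpen 𝔄 A) = m A :=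
  le_antisymm (coverInf_le hA subset_rfl) <| le_coverInf h𝔄 fun _ hB hAB =>
    addContent_le_of_sdiff_eq_zero h𝔄.isSetRing hA hB
      (hm0 _ (h𝔄.sdiff_mem hA hB) (sdiff_finite_of_remainderBasicOpen_subset h𝔄 hA hB hAB))

noncomputable def remainderContent (h𝔄 : IsSetAlgebra 𝔄) (m : AddContent ℝ≥0 𝔄) :
    Content (stoneRemainder 𝔄) where
  toFun K := coverInf m (K : Set (stoneRemainder 𝔄))
  mono' _ _ := coverInf_mono h𝔄
  sup_disjoint' K₁ K₂ hd _ _ := by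
    rw [Compacts.coe_sup]
    exact coverInf_union_of_disjoint h𝔄 K₁.isCompact K₂.isCompact hd
  sup_le' K₁ K₂ := by
    rw [Compacts.coe_sup]
    exact coverInf_union_le h𝔄

lemma remainderContent_measure_remainderBasicOpen (h𝔄 : IsSetAlgebra 𝔄)
    (hm0 : ∀ A ∈ 𝔄, A.Finite → m A = 0) [CompactSpace (stoneRemainder 𝔄)] (hA : A ∈ 𝔄) :
    (remainderContent h𝔄 m).measure (remainderBasicOpen 𝔄 A) = m A := by
  have hopen := isOpen_remainderBasicOpen hA
  rw [Content.measure_apply _ hopen.measurableSet, Content.outerMeasure_of_isOpen _ _ hopen,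
    Content.innerContent_of_isCompact _ (isClosed_remainderBasicOpen h𝔄 hA).isCompact hopen]
  exact congrArg _ (coverInf_remainderBasicOpen h𝔄 hm0 hA)

end Content

theorem exists_regular_probabilityMeasure_stoneRemainder (h𝔄 : IsSetAlgebra 𝔄)
    (hfin : ∀ F : Set D, F.Finite → F ∈ 𝔄) (m : AddContent ℝ≥0 𝔄) (hm1 : m univ = 1)
    (hm : ∀ A ∈ 𝔄, m A = 0 ↔ A.Finite) :
    ∃ ν : Measure (stoneRemainder 𝔄), IsProbabilityMeasure ν ∧ ν.Regular ∧
      ∀ U : Set (stoneRemainder 𝔄), IsOpen U → U.Nonempty → 0 < ν U := by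
  have := compactSpace_stoneRemainder h𝔄 hfin
  have hm0 : ∀ A ∈ 𝔄, A.Finite → m A = 0 := fun A hA => (hm A hA).2
  refine ⟨(remainderContent h𝔄 m).measure, ⟨?_⟩, inferInstance, fun U hU ⟨u, hu⟩ => ?_⟩
  · simpa [remainderBasicOpen_univ, hm1] using
      remainderContent_measure_remainderBasicOpen h𝔄 hm0 h𝔄.univ_mem
  · obtain ⟨_, ⟨_, ⟨A, hA, rfl⟩, rfl⟩, huA, hAU⟩ :=
      ((isTopologicalBasis_basicOpen h𝔄).isInducing .subtypeVal).exists_subset_of_mem_open hu hU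
    have hmA : m A ≠ 0 := fun h => u.2 A huA ((hm A hA).1 h)
    calc (0 : ℝ≥0∞) < m A := ENNReal.coe_pos.2 (pos_iff_ne_zero.2 hmA)
      _ = (remainderContent h𝔄 m).measure (remainderBasicOpen 𝔄 A) :=
        (remainderContent_measure_remainderBasicOpen h𝔄 hm0 hA).symm
      _ ≤ _ := measure_mono hAU

theorem sigmaCentredModFin_of_separable [Infinite D] (h𝔄 : IsSetAlgebra 𝔄)
    (h : ∃ T : Set (stoneRemainder 𝔄), T.Countable ∧ Dense T) : SigmaCentredModFin 𝔄 := by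
  obtain ⟨T, hTc, hTd⟩ := h
  obtain ⟨u₀, hu₀, -⟩ := exists_mem_stoneRemainder h𝔄 h𝔄.univ_mem infinite_univ
  have : Nonempty (stoneRemainder 𝔄) := ⟨⟨u₀, hu₀⟩⟩
  obtain ⟨f, rfl⟩ := hTc.exists_eq_range hTd.nonempty
  refine ⟨fun n => (f n).1.1, fun n => val_subset _, fun A hA hinf => ?_,
    fun n t ht => (f n).2 _ (sInter_mem t ht)⟩
  obtain ⟨u, hu, hAu⟩ := exists_mem_stoneRemainder h𝔄 hA hinf
  obtain ⟨_, hx, n, rfl⟩ :=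
    hTd.inter_open_nonempty _ (isOpen_remainderBasicOpen hA) ⟨⟨u, hu⟩, hAu⟩
  exact ⟨n, hx⟩

end StoneOf

theorem stmt_15_general (D : Type*) (𝔄 : Set (Set D))
    (hempt : ∅ ∈ 𝔄)
    (hunion : ∀ A ∈ 𝔄, ∀ B ∈ 𝔄, A ∪ B ∈ 𝔄)
    (hcompl : ∀ A ∈ 𝔄, Aᶜ ∈ 𝔄)
    (hfin : ∀ F : Set D, F.Finite → F ∈ 𝔄)
    (μ : Set D → ℝ)
    (hnonneg : ∀ A ∈ 𝔄, 0 ≤ μ A) (hprob : μ Set.univ = 1)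
    (hadd : ∀ A ∈ 𝔄, ∀ B ∈ 𝔄, Disjoint A B → μ (A ∪ B) = μ A + μ B)
    (hasp : ∀ A ∈ 𝔄, (μ A = 0 ↔ A.Finite))
    (hnsc : ¬ SigmaCentredModFin 𝔄) :
    -- K is compact
    CompactSpace (StoneOf 𝔄) ∧
    -- D embeds (via principal ultrafilters) as a dense set of isolated points
    (∃ e : D → StoneOf 𝔄,
      (∀ d : D, (e d).1 = {A : Set D | A ∈ 𝔄 ∧ d ∈ A}) ∧
      Function.Injective e ∧ DenseRange e ∧ ∀ d : D, IsOpen {e d}) ∧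
    -- the remainder is not separable
    ¬ (∃ T : Set (stoneRemainder 𝔄), T.Countable ∧ Dense T) ∧
    -- the remainder carries a strictly positive regular Borel prob. measure
    ∃ m : Measure (stoneRemainder 𝔄),
      IsProbabilityMeasure m ∧ m.Regular ∧
      ∀ U : Set (stoneRemainder 𝔄), IsOpen U → U.Nonempty → 0 < m U := by
  have h𝔄 : IsSetAlgebra 𝔄 := ⟨hempt, hcompl, fun A B hA hB => hunion A hA B hB⟩
  have hsing (d : D) : {d} ∈ 𝔄 := hfin _ (finite_singleton d)
  have : Infinite D := infinite_univ_iff.1 fun h => by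
    simpa [hprob] using (hasp _ h𝔄.univ_mem).2 h
  let m : AddContent ℝ≥0 𝔄 := h𝔄.isSetRing.addContent_of_union (fun A => (μ A).toNNReal)
    (by simp [(hasp ∅ hempt).2 finite_empty]) fun hA hB hAB => by
      rw [hadd _ hA _ hB hAB, Real.toNNReal_add (hnonneg _ hA) (hnonneg _ hB)]
  refine ⟨StoneOf.compactSpace h𝔄,
    ⟨fun d => StoneOf.ofUltrafilter h𝔄 (pure d), fun d => rfl,
      StoneOf.ofUltrafilter_pure_injective h𝔄 hsing, StoneOf.denseRange_ofUltrafilter_pure h𝔄,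
      fun d => ?_⟩,
    fun hsep => hnsc (StoneOf.sigmaCentredModFin_of_separable h𝔄 hsep),
    StoneOf.exists_regular_probabilityMeasure_stoneRemainder h𝔄 hfin m ?_ fun A hA => ?_⟩
  · rw [← StoneOf.basicOpen_singleton h𝔄 (hsing d)]
    exact StoneOf.isOpen_basicOpen (hsing d)
  · show (μ univ).toNNReal = 1
    rw [hprob, Real.toNNReal_one]
  · show (μ A).toNNReal = 0 ↔ A.Finite
    rw [Real.toNNReal_eq_zero, ← hasp A hA, (hnonneg A hA).ge_iff_eq']

/-- if 𝔄 carries an almost strictly positive finitely additive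
probability measure and 𝔄/fin is not σ-centred, then the Stone space K of 𝔄
is a compactification of the discrete space D whose remainder is nonseparable
and carries a strictly positive regular Borel probability measure. -/
theorem stmt_15 (D : Type*) [Countable D] (𝔄 : Set (Set D))
    (hempt : ∅ ∈ 𝔄) (huniv : Set.univ ∈ 𝔄)
    (hunion : ∀ A ∈ 𝔄, ∀ B ∈ 𝔄, A ∪ B ∈ 𝔄)
    (hinter : ∀ A ∈ 𝔄, ∀ B ∈ 𝔄, A ∩ B ∈ 𝔄)
    (hcompl : ∀ A ∈ 𝔄, Aᶜ ∈ 𝔄)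
    (hfin : ∀ F : Set D, F.Finite → F ∈ 𝔄)
    (μ : Set D → ℝ)
    (hnonneg : ∀ A ∈ 𝔄, 0 ≤ μ A) (hprob : μ Set.univ = 1)
    (hadd : ∀ A ∈ 𝔄, ∀ B ∈ 𝔄, Disjoint A B → μ (A ∪ B) = μ A + μ B)
    (hasp : ∀ A ∈ 𝔄, (μ A = 0 ↔ A.Finite))
    (hnsc : ¬ SigmaCentredModFin 𝔄) :
    -- K is compact
    CompactSpace (StoneOf 𝔄) ∧
    -- D embeds (via principal ultrafilters) as a dense set of isolated points
    (∃ e : D → StoneOf 𝔄,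
      (∀ d : D, (e d).1 = {A : Set D | A ∈ 𝔄 ∧ d ∈ A}) ∧
      Function.Injective e ∧ DenseRange e ∧ ∀ d : D, IsOpen {e d}) ∧
    -- the remainder is not separable
    ¬ (∃ T : Set (stoneRemainder 𝔄), T.Countable ∧ Dense T) ∧
    -- the remainder carries a strictly positive regular Borel prob. measure
    ∃ m : Measure (stoneRemainder 𝔄),
      IsProbabilityMeasure m ∧ m.Regular ∧
      ∀ U : Set (stoneRemainder 𝔄), IsOpen U → U.Nonempty → 0 < m U :=
  stmt_15_general D 𝔄 hempt hunion hcompl hfin μ hnonneg hprob hadd hasp hnsc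
end
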